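/- Let q ∈ ℂ be nonzero and not a root of unity (qⁿ ≠ 1 for every n ≥ 1). Let F = ℂ(s,t) be the field of rational functions in two independent variables s and t over ℂ, and let τ : F → F be the ℂ-algebra field automorphism determined by τ(s) = s/q and τ(t) = t. Let R be an element of the subfield ℂ(s) of rational functions in s alone, and let h be a nonzero element of the subfield ℂ(t) of rational functions in t alone. If there exists f₁ ∈ F with f₁ − τ(f₁) = R·h, then there exists f ∈ ℂ(s) with f − τ(f) = R. -/

import Mathlib

/-!
Since `h ∈ ℂ(t)` is fixed by `τ`, `g = f₁ / h` solves `g - τ g = R`. Write `g = p / w` with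
`p, w ∈ ℂ[s,t]` and clear denominators: the resulting polynomial identity involves `τ` only
through the substitution `s ↦ s/q`, and `R ∈ ℂ(s)`, so it survives the specialization
`t ↦ t₀` for any `t₀ ∈ ℂ`. Choosing `t₀` with `w(s, t₀) ≠ 0`, the function
`p(s, t₀) / w(s, t₀) ∈ ℂ(s)` solves the same equation.
-/

/-- The field `ℂ(s,t)` of rational functions in two independent variables over `ℂ`,
realized as the fraction field of the polynomial ring `ℂ[s,t]`. -/
noncomputable abbrev RatFunc2 : Type := FractionRing (MvPolynomial (Fin 2) ℂ)

/-- The variable `s` of `ℂ(s,t)`. -/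
noncomputable def varS : RatFunc2 :=
  algebraMap (MvPolynomial (Fin 2) ℂ) RatFunc2 (MvPolynomial.X 0)

/-- The variable `t` of `ℂ(s,t)`. -/
noncomputable def varT : RatFunc2 :=
  algebraMap (MvPolynomial (Fin 2) ℂ) RatFunc2 (MvPolynomial.X 1)

open MvPolynomial IntermediateField

theorem AlgHom.eq_self_of_mem_adjoin_simple {F E : Type*} [Field F] [Field E] [Algebra F E]
    (τ : E →ₐ[F] E) {a x : E} (ha : τ a = a) (hx : x ∈ F⟮a⟯) : τ x = x := by
  have := adjoin_algHom_ext F (φ₁ := τ.comp F⟮a⟯.val) (φ₂ := F⟮a⟯.val) (by simpa using ha)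
  exact congr($this ⟨x, hx⟩)

theorem sub_map_div_eq_of_map_eq {E : Type*} [Field E] (τ : E ≃+* E) {f h R : E}
    (hτh : τ h = h) (hh : h ≠ 0) (hf : f - τ f = R * h) : f / h - τ (f / h) = R := by
  rw [map_div₀, hτh, div_sub_div_same, hf, mul_div_cancel_right₀ _ hh]

theorem MvPolynomial.exists_eval_ne_zero {K : Type*} [CommRing K] [IsDomain K] [Infinite K]
    {σ : Type*} {p : MvPolynomial σ K} (hp : p ≠ 0) : ∃ x, eval x p ≠ 0 := by
  by_contra! h
  exact hp (funext fun x => by simpa using h x)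

@[simp]
theorem MvPolynomial.algebraMap_C_eq_algebraMap {R σ A : Type*} [CommSemiring R] [CommSemiring A]
    [Algebra R A] [Algebra (MvPolynomial σ R) A] [IsScalarTower R (MvPolynomial σ R) A] (a : R) :
    algebraMap (MvPolynomial σ R) A (C a) = algebraMap R A a :=
  (IsScalarTower.algebraMap_apply R (MvPolynomial σ R) A a).symm

namespace RatFunc2

noncomputable def scaleS (q : ℂ) : MvPolynomial (Fin 2) ℂ →ₐ[ℂ] MvPolynomial (Fin 2) ℂ :=
  aeval ![C q⁻¹ * X 0, X 1]

noncomputable def evalT (t₀ : ℂ) : MvPolynomial (Fin 2) ℂ →ₐ[ℂ] MvPolynomial (Fin 2) ℂ :=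
  aeval ![X 0, C t₀]

theorem evalT_scaleS (q t₀ : ℂ) (p : MvPolynomial (Fin 2) ℂ) :
    evalT t₀ (scaleS q p) = scaleS q (evalT t₀ p) := by
  have : (evalT t₀).comp (scaleS q) = (scaleS q).comp (evalT t₀) := by
    ext i
    fin_cases i <;> simp [evalT, scaleS]
  exact AlgHom.congr_fun this p

theorem evalT_aeval_X_zero (t₀ : ℂ) (r : Polynomial ℂ) :
    evalT t₀ (Polynomial.aeval (X 0) r) = Polynomial.aeval (X 0) r := by
  rw [← Polynomial.aeval_algHom_apply]
  simp [evalT]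

theorem exists_evalT_ne_zero {w : MvPolynomial (Fin 2) ℂ} (hw : w ≠ 0) :
    ∃ t₀, evalT t₀ w ≠ 0 := by
  obtain ⟨x, hx⟩ := exists_eval_ne_zero hw
  refine ⟨x 1, fun h => hx ?_⟩
  have : (eval x).comp (evalT (x 1)).toRingHom = eval x := by
    ext i
    · simp [evalT]
    · fin_cases i <;> simp [evalT]
  rw [← this]
  simp [h]

theorem algebraMap_evalT_mem_adjoin_varS (t₀ : ℂ) (p : MvPolynomial (Fin 2) ℂ) :
    algebraMap _ RatFunc2 (evalT t₀ p) ∈ ℂ⟮varS⟯ := by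
  induction p using MvPolynomial.induction_on with
  | C a => simp [evalT]
  | add p r hp hr => simpa using add_mem hp hr
  | mul_X p i hp =>
    rw [map_mul, map_mul]
    refine mul_mem hp ?_
    fin_cases i
    · simpa [evalT, varS] using mem_adjoin_simple_self ℂ varS
    · simp [evalT]

theorem exists_eq_div_of_mem_adjoin_varS {R : RatFunc2} (hR : R ∈ ℂ⟮varS⟯) :
    ∃ a b : Polynomial ℂ,
      R = algebraMap (MvPolynomial (Fin 2) ℂ) RatFunc2 (Polynomial.aeval (X 0) a) /
        algebraMap (MvPolynomial (Fin 2) ℂ) RatFunc2 (Polynomial.aeval (X 0) b) := by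
  obtain ⟨a, b, rfl⟩ := (mem_adjoin_simple_iff ℂ R).mp hR
  refine ⟨a, b, ?_⟩
  simp only [← IsScalarTower.toAlgHom_apply ℂ (MvPolynomial (Fin 2) ℂ) RatFunc2,
    ← Polynomial.aeval_algHom_apply]
  rfl

variable (q : ℂ) (τ : RatFunc2 ≃ₐ[ℂ] RatFunc2)

theorem map_algebraMap_eq_algebraMap_scaleS (hτs : τ varS = varS / algebraMap ℂ RatFunc2 q)
    (hτt : τ varT = varT) (p : MvPolynomial (Fin 2) ℂ) :
    τ (algebraMap _ RatFunc2 p) = algebraMap _ RatFunc2 (scaleS q p) := by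
  have : (τ : RatFunc2 →ₐ[ℂ] RatFunc2).comp (IsScalarTower.toAlgHom ℂ _ RatFunc2) =
      (IsScalarTower.toAlgHom ℂ _ RatFunc2).comp (scaleS q) := by
    ext i
    fin_cases i
    · simpa [scaleS, varS, div_eq_inv_mul] using hτs
    · simpa [scaleS, varT] using hτt
  exact AlgHom.congr_fun this p

theorem div_sub_map_div_eq_div_iff (hτs : τ varS = varS / algebraMap ℂ RatFunc2 q)
    (hτt : τ varT = varT) {p w a b : MvPolynomial (Fin 2) ℂ} (hw : w ≠ 0) (hb : b ≠ 0) :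
    algebraMap _ RatFunc2 p / algebraMap _ RatFunc2 w -
        τ (algebraMap _ RatFunc2 p / algebraMap _ RatFunc2 w) =
      algebraMap _ RatFunc2 a / algebraMap _ RatFunc2 b ↔
      p * scaleS q w * b - scaleS q p * w * b = a * w * scaleS q w := by
  have hinj := IsFractionRing.injective (MvPolynomial (Fin 2) ℂ) RatFunc2
  have hw' : algebraMap _ RatFunc2 w ≠ 0 := (map_ne_zero_iff _ hinj).mpr hw
  have hb' : algebraMap _ RatFunc2 b ≠ 0 := (map_ne_zero_iff _ hinj).mpr hb
  have hσw : algebraMap _ RatFunc2 (scaleS q w) ≠ 0 := by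
    rw [← map_algebraMap_eq_algebraMap_scaleS q τ hτs hτt]
    exact (map_ne_zero τ).mpr hw'
  rw [map_div₀, map_algebraMap_eq_algebraMap_scaleS q τ hτs hτt,
    map_algebraMap_eq_algebraMap_scaleS q τ hτs hτt, div_sub_div _ _ hw' hσw,
    div_eq_div_iff (mul_ne_zero hw' hσw) hb', ← hinj.eq_iff]
  simp only [map_sub, map_mul]
  constructor <;> intro h <;> linear_combination h

theorem exists_mem_adjoin_varS_sub_map_eq (hτs : τ varS = varS / algebraMap ℂ RatFunc2 q)
    (hτt : τ varT = varT) {R g : RatFunc2} (hR : R ∈ ℂ⟮varS⟯) (hg : g - τ g = R) :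
    ∃ f ∈ ℂ⟮varS⟯, f - τ f = R := by
  obtain ⟨a, b, rfl⟩ := exists_eq_div_of_mem_adjoin_varS hR
  by_cases hb : Polynomial.aeval (X 0 : MvPolynomial (Fin 2) ℂ) b = 0
  · -- division by zero makes `R = 0`
    exact ⟨0, zero_mem _, by simp [hb]⟩
  obtain ⟨p, w, hw, rfl⟩ := IsFractionRing.div_surjective (A := MvPolynomial (Fin 2) ℂ) g
  have hw0 := nonZeroDivisors.ne_zero hw
  obtain ⟨t₀, ht₀⟩ := exists_evalT_ne_zero hw0
  refine ⟨_, div_mem (algebraMap_evalT_mem_adjoin_varS t₀ p)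
    (algebraMap_evalT_mem_adjoin_varS t₀ w), ?_⟩
  rw [div_sub_map_div_eq_div_iff q τ hτs hτt ht₀ hb]
  have := congrArg (evalT t₀) ((div_sub_map_div_eq_div_iff q τ hτs hτt hw0 hb).1 hg)
  simpa only [map_sub, map_mul, evalT_scaleS, evalT_aeval_X_zero] using this

end RatFunc2

theorem decoupling_descends_to_single_variable_general
    (q : ℂ)
    (τ : RatFunc2 ≃ₐ[ℂ] RatFunc2)
    (hτs : τ varS = varS / algebraMap ℂ RatFunc2 q)
    (hτt : τ varT = varT)
    (R : RatFunc2) (hR : R ∈ IntermediateField.adjoin ℂ ({varS} : Set RatFunc2))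
    (h : RatFunc2) (hh : h ∈ IntermediateField.adjoin ℂ ({varT} : Set RatFunc2))
    (hh0 : h ≠ 0)
    (hf₁ : ∃ f₁ : RatFunc2, f₁ - τ f₁ = R * h) :
    ∃ f ∈ IntermediateField.adjoin ℂ ({varS} : Set RatFunc2), f - τ f = R := by
  obtain ⟨f₁, hf₁⟩ := hf₁
  have hτh : τ h = h := (τ : RatFunc2 →ₐ[ℂ] RatFunc2).eq_self_of_mem_adjoin_simple hτt hh
  exact RatFunc2.exists_mem_adjoin_varS_sub_map_eq q τ hτs hτt hR
    (sub_map_div_eq_of_map_eq τ.toRingEquiv hτh hh0 hf₁)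

/-- Let `q ∈ ℂ` be nonzero and not a root of unity, and let `τ` be the `ℂ`-algebra
automorphism of `ℂ(s,t)` with `τ(s) = s/q` and `τ(t) = t`. If `R ∈ ℂ(s)`, `h ∈ ℂ(t)`
is nonzero, and some `f₁ ∈ ℂ(s,t)` satisfies the decoupling equation
`f₁ − τ(f₁) = R·h`, then some `f ∈ ℂ(s)` satisfies `f − τ(f) = R`. -/
theorem decoupling_descends_to_single_variable
    (q : ℂ) (hq0 : q ≠ 0) (hqroot : ∀ n : ℕ, 1 ≤ n → q ^ n ≠ 1)
    (τ : RatFunc2 ≃ₐ[ℂ] RatFunc2)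
    (hτs : τ varS = varS / algebraMap ℂ RatFunc2 q)
    (hτt : τ varT = varT)
    (R : RatFunc2) (hR : R ∈ IntermediateField.adjoin ℂ ({varS} : Set RatFunc2))
    (h : RatFunc2) (hh : h ∈ IntermediateField.adjoin ℂ ({varT} : Set RatFunc2))
    (hh0 : h ≠ 0)
    (hf₁ : ∃ f₁ : RatFunc2, f₁ - τ f₁ = R * h) :
    ∃ f ∈ IntermediateField.adjoin ℂ ({varS} : Set RatFunc2), f - τ f = R :=
  decoupling_descends_to_single_variable_general q τ hτs hτt R hR h hh hh0 hf₁
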